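/- Let M be a Seifert-fibered 3-manifold with fundamental group G fitting into a short exact sequence 1 → ℤ → G → S → 1, where S is virtually a surface group. Assuming that surface groups satisfy ωACC, the group G satisfies ωACC. -/

import Mathlib

/-- `RankLE H r`: the subgroup `H` is generated by at most `r` elements. -/
def RankLE {G : Type*} [Group G] (H : Subgroup G) (r : ℕ) : Prop :=
  ∃ S : Finset G, (S : Set G) ⊆ (H : Set G) ∧ Subgroup.closure (S : Set G) = H ∧ S.card ≤ r

/-- A group satisfies ωACC if every ascending chain of subgroups of uniformly
bounded rank is eventually constant. -/
def OmegaACC (G : Type*) [Group G] : Prop :=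
  ∀ r : ℕ, ∀ H : ℕ → Subgroup G, Monotone H → (∀ n, RankLE (H n) r) →
    ∃ N, ∀ n, N ≤ n → H n = H N

open scoped commutatorElement in
/-- The surface relator `[a₁,b₁]⋯[a_g,b_g]` in the free group on `2g` generators. -/
def surfaceRelator (g : ℕ) : FreeGroup (Fin g × Fin 2) :=
  (List.ofFn (fun i : Fin g => ⁅FreeGroup.of (i, (0 : Fin 2)), FreeGroup.of (i, (1 : Fin 2))⁆)).prod

/-- The fundamental group of the closed orientable surface of genus `g`. -/
def SurfaceGroup (g : ℕ) : Type :=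
  PresentedGroup ({surfaceRelator g} : Set (FreeGroup (Fin g × Fin 2)))

noncomputable instance (g : ℕ) : Group (SurfaceGroup g) := by
  unfold SurfaceGroup; infer_instance

/-! The image in `S` of an ascending chain of bounded rank stabilizes, because ωACC passes from
the finite-index surface subgroup to `S`: by Schreier, the intersections with the surface subgroup
have bounded rank and so stabilize, after which the chain grows only by a bounded relative index.
The intersection of the chain with the kernel `ℤ` stabilizes because `ℤ` is Noetherian, and two
nested subgroups with the same image and the same intersection with the kernel coincide. -/

open Subgroup

section Rank

variable {G G' : Type*} [Group G] [Group G'] {r : ℕ}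

theorem rankLE_iff_fg_and_rank_le {H : Subgroup G} :
    RankLE H r ↔ ∃ _ : Group.FG H, Group.rank H ≤ r := by
  classical
  constructor
  · rintro ⟨S, -, rfl, hcard⟩
    have : Group.FG (closure (S : Set G)) := (Group.fg_iff_subgroup_fg _).2 ⟨S, rfl⟩
    exact ⟨this, (rank_closure_finset_le_card S).trans hcard⟩
  · rintro ⟨_, hrank⟩
    obtain ⟨T, hcard, hT⟩ := Group.rank_spec H
    refine ⟨T.image H.subtype, ?_, ?_, Finset.card_image_le.trans (hcard ▸ hrank)⟩
    · rw [Finset.coe_image]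
      rintro _ ⟨x, -, rfl⟩
      exact x.2
    · rw [Finset.coe_image, ← MonoidHom.map_closure, hT, ← MonoidHom.range_eq_map,
        range_subtype]

theorem RankLE.map (f : G →* G') {H : Subgroup G} (h : RankLE H r) : RankLE (H.map f) r := by
  classical
  obtain ⟨S, hS, hcl, hcard⟩ := h
  refine ⟨S.image f, ?_, ?_, Finset.card_image_le.trans hcard⟩
  · rw [Finset.coe_image, coe_map]
    exact Set.image_mono hS
  · rw [Finset.coe_image, ← MonoidHom.map_closure, hcl]

theorem rankLE_map_iff {f : G →* G'} (hf : Function.Injective f) {H : Subgroup G} :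
    RankLE (H.map f) r ↔ RankLE H r := by
  let e := H.equivMapOfInjective f hf
  simp only [rankLE_iff_fg_and_rank_le]
  constructor
  · rintro ⟨_, h⟩
    have := Group.fg_of_surjective (f := e.symm.toMonoidHom) e.symm.surjective
    exact ⟨this, (Group.rank_congr e).trans_le h⟩
  · rintro ⟨_, h⟩
    have := Group.fg_of_surjective (f := e.toMonoidHom) e.surjective
    exact ⟨this, (Group.rank_congr e).symm.trans_le h⟩

theorem rankLE_subgroupOf_iff {H K : Subgroup G} :
    RankLE (H.subgroupOf K) r ↔ RankLE (H ⊓ K) r := by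
  rw [← rankLE_map_iff K.subtype_injective, subgroupOf_map_subtype]

theorem Subgroup.relIndex_le_index (H K : Subgroup G) [H.FiniteIndex] : H.relIndex K ≤ H.index :=
  H.relIndex_top_right ▸
    relIndex_le_of_le_right le_top isFiniteRelIndex_of_finiteIndex.relIndex_ne_zero

/-- Schreier's bound on the rank of a finite-index subgroup. -/
theorem RankLE.inf_of_finiteIndex {H : Subgroup G} (h : RankLE H r) (K : Subgroup G)
    [K.FiniteIndex] : RankLE (H ⊓ K) (K.index * r) := by
  obtain ⟨_, hr⟩ := rankLE_iff_fg_and_rank_le.1 h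
  rw [inf_comm, ← rankLE_subgroupOf_iff, rankLE_iff_fg_and_rank_le]
  have : Group.FG (K.subgroupOf H) := fg_of_index_ne_zero _
  exact ⟨this, (rank_le_index_mul_rank (H := K.subgroupOf H)).trans
    (Nat.mul_le_mul (K.relIndex_le_index H) hr)⟩

end Rank

theorem Monotone.exists_forall_ge_eq_of_le {c : ℕ → ℕ} (hc : Monotone c) {d : ℕ}
    (hd : ∀ n, c n ≤ d) : ∃ N, ∀ n, N ≤ n → c n = c N := by
  obtain ⟨N, hN⟩ := WellFoundedLT.antitone_chain_condition (f := fun n => d - c n)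
    fun m n h => Nat.sub_le_sub_left (hc h) d
  refine ⟨N, fun n hn => ?_⟩
  have := hN n hn
  have := hc hn
  have := hd n
  omega

theorem Subgroup.exists_eq_of_relIndex_le {G : Type*} [Group G] {C : Subgroup G}
    {H : ℕ → Subgroup G} (hm : Monotone H) (hC : ∀ n, C ≤ H n)
    (hfin : ∀ n, C.relIndex (H n) ≠ 0) {d : ℕ} (hd : ∀ n, C.relIndex (H n) ≤ d) :
    ∃ N, ∀ n, N ≤ n → H n = H N := by
  obtain ⟨N, hN⟩ := Monotone.exists_forall_ge_eq_of_le
    (fun m n h => relIndex_le_of_le_right (hm h) (hfin n)) hd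
  refine ⟨N, fun n hn => le_antisymm ?_ (hm hn)⟩
  have htower := relIndex_mul_relIndex C (H N) (H n) (hC N) (hm hn)
  rw [hN n hn, Nat.mul_eq_left (hfin N)] at htower
  exact relIndex_eq_one.1 htower

theorem Subgroup.eq_of_le_of_map_eq_of_inf_ker_eq {G S : Type*} [Group G] [Group S]
    {H K : Subgroup G} (f : G →* S) (hle : H ≤ K) (hmap : H.map f = K.map f)
    (hker : H ⊓ f.ker = K ⊓ f.ker) : H = K := by
  refine le_antisymm hle fun x hx => ?_
  obtain ⟨y, hy, hyx⟩ : f x ∈ H.map f := hmap ▸ mem_map_of_mem f hx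
  have hy : y ∈ H := hy
  have hyx' : y⁻¹ * x ∈ K ⊓ f.ker :=
    mem_inf.2 ⟨mul_mem (inv_mem (hle hy)) hx, by simp [hyx]⟩
  rw [← hker] at hyx'
  simpa only [mul_inv_cancel_left] using mul_mem hy (mem_inf.1 hyx').1

namespace OmegaACC

variable {G S : Type*} [Group G] [Group S]

theorem of_mulEquiv (h : OmegaACC G) (e : G ≃* S) : OmegaACC S := by
  intro r H hm hr
  obtain ⟨N, hN⟩ := h r (fun n => (H n).map e.symm.toMonoidHom)
    (fun a b hab => map_mono (hm hab)) (fun n => (hr n).map _)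
  refine ⟨N, fun n hn => ?_⟩
  simpa [map_map] using congrArg (map e.toMonoidHom) (hN n hn)

theorem of_finiteIndex (K : Subgroup G) [K.FiniteIndex] (hK : OmegaACC K) : OmegaACC G := by
  intro r H hm hr
  obtain ⟨N₁, hN₁⟩ := hK (K.index * r) (fun n => (H n).subgroupOf K)
    (fun a b hab => subgroupOf_mono K (hm hab))
    fun n => rankLE_subgroupOf_iff.2 ((hr n).inf_of_finiteIndex K)
  have hinf : ∀ n, H (N₁ + n) ⊓ K = H N₁ ⊓ K := fun n =>
    subgroupOf_inj.1 (hN₁ _ (Nat.le_add_right _ _))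
  have hrel : ∀ n, (H N₁ ⊓ K).relIndex (H (N₁ + n)) = K.relIndex (H (N₁ + n)) := by
    intro n
    rw [← hinf, inf_relIndex_left]
  obtain ⟨N₂, hN₂⟩ :=
    exists_eq_of_relIndex_le (C := H N₁ ⊓ K) (H := fun n => H (N₁ + n))
      (fun a b hab => hm (by omega)) (fun n => hinf n ▸ inf_le_left)
      (fun n => hrel n ▸ isFiniteRelIndex_of_finiteIndex.relIndex_ne_zero)
      (fun n => hrel n ▸ K.relIndex_le_index _)
  refine ⟨N₁ + N₂, fun n hn => ?_⟩
  obtain ⟨k, rfl⟩ := Nat.exists_eq_add_of_le hn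
  simpa [add_assoc] using hN₂ (N₂ + k) (by omega)

theorem of_range_eq_ker {A : Type*} [Group A] [WellFoundedGT (Subgroup A)] (i : A →* G)
    (p : G →* S) (hex : i.range = p.ker) (hS : OmegaACC S) : OmegaACC G := by
  intro r H hm hr
  obtain ⟨N₁, hN₁⟩ := hS r (fun n => (H n).map p) (fun a b hab => map_mono (hm hab))
    fun n => (hr n).map p
  obtain ⟨N₂, hN₂⟩ := WellFoundedGT.monotone_chain_condition
    ⟨fun n => (H n).comap i, fun a b hab => comap_mono (hm hab)⟩
  have hker : ∀ n, H n ⊓ p.ker = ((H n).comap i).map i := fun n => by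
    rw [map_comap_eq, hex, inf_comm]
  refine ⟨max N₁ N₂, fun n hn => (eq_of_le_of_map_eq_of_inf_ker_eq p (hm hn) ?_ ?_).symm⟩
  · rw [hN₁ n (le_of_max_le_left hn), hN₁ _ (le_max_left _ _)]
  · rw [hker, hker]
    exact congrArg (map i)
      ((hN₂ _ (le_max_right _ _)).symm.trans (hN₂ n (le_of_max_le_right hn)))

end OmegaACC

instance : WellFoundedGT (Subgroup (Multiplicative ℤ)) :=
  (Subgroup.toAddSubgroup'.trans AddSubgroup.toIntSubmodule).strictMono.wellFoundedGT

theorem seifert_fibered_omegaACC_general {G S : Type*} [Group G] [Group S]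
    (i : Multiplicative ℤ →* G) (p : G →* S)
    (hex : i.range = p.ker)
    (S₀ : Subgroup S) [S₀.FiniteIndex] (g : ℕ)
    (hiso : Nonempty (S₀ ≃* SurfaceGroup g))
    (hsurf : ∀ g' : ℕ, OmegaACC (SurfaceGroup g')) :
    OmegaACC G :=
  have hS : OmegaACC S := .of_finiteIndex S₀ ((hsurf g).of_mulEquiv hiso.some.symm)
  hS.of_range_eq_ker i p hex

/-- Let `M` be a Seifert-fibered 3-manifold whose fundamental group `G` fits into a
short exact sequence `1 → ℤ → G → S → 1` with `S` virtually a surface group.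
Assuming Shusterman's theorem that surface groups satisfy ωACC, `G` satisfies ωACC. -/
theorem seifert_fibered_omegaACC {G S : Type*} [Group G] [Group S]
    (i : Multiplicative ℤ →* G) (p : G →* S)
    (hi : Function.Injective i) (hp : Function.Surjective p) (hex : i.range = p.ker)
    (S₀ : Subgroup S) [S₀.FiniteIndex] (g : ℕ)
    (hiso : Nonempty (S₀ ≃* SurfaceGroup g))
    (hsurf : ∀ g' : ℕ, OmegaACC (SurfaceGroup g')) :
    OmegaACC G :=
  seifert_fibered_omegaACC_general i p hex S₀ g hiso hsurf
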